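/- arXiv:1306.4821 — 3 statements merged into one kernel-verified Lean document; each statement's English description precedes it below -/
import Mathlib

section
/- Let (W,S) be a Coxeter system such that the parabolic subgroup W_J is finite for every proper subset J ⊊ S. Let Γ be a connected W-digraph with finite vertex set, and suppose the H-module M(Γ) is isomorphic to the H-module afforded by some W-graph over ℚ. Then Γ is acyclic. -/
/-!
A directed circuit through `a` lies in the strongly connected component `R` of `a`. Transport
the vertices of `R` to the `W`-graph module and measure their coordinates with the `u`-adic
valuation. Along an edge `v → w` labelled `s` one has `(T_s + 1) v = c (v + w)` with
`c ≡ 1 mod u`, so by the `W`-graph formulas the `x`-coordinate of `w` gains a factor `u` over that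
of `v` when `s ∉ I x`, and otherwise is bounded below by that of `v` and by `u` times the
coordinates of `v` at the `y` with `s ∉ I y`. Start from a coordinate of least valuation among the
`x` that miss some label of `R`, and propagate around `R`: the least valuation exceeds itself, so
all these coordinates vanish. Hence, for an edge `a → b` of `R` labelled `s`, the image of `a` is
supported where `s ∈ I x`, so `T_s` acts on it by `-1`; but `T_s a + a = c (a + b) ≠ 0`.
-/

open Finsupp

set_option synthInstance.maxHeartbeats 1000000
set_option maxHeartbeats 1000000

noncomputable section

/-- The field `ℚ(u)` of rational functions. -/
abbrev Kq : Type := RatFunc ℚ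

/-- The indeterminate `u`. -/
def uu : Kq := RatFunc.X

/-- An `S`-labeled digraph on vertex type `V` with labels in `B`:
`Edge a b s d` means there is an edge from `a` to `b` labeled `s`, which is
dashed if `d = true` and solid if `d = false`.  There are no loops, and every
vertex occurs in exactly one edge with any given label. -/
structure SLabeledDigraph (V B : Type*) where
  Edge : V → V → B → Bool → Prop
  no_loop : ∀ v s d, ¬ Edge v v s d
  unique_edge : ∀ v s, ∃! e : V × V × Bool,
    (e.1 = v ∨ e.2.1 = v) ∧ Edge e.1 e.2.1 s e.2.2

namespace SLabeledDigraph

variable {V B : Type*} (Γ : SLabeledDigraph V B)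

/-- Swap the endpoints of an edge datum. -/
def eswap {V : Type*} (e : V × V × Bool) : V × V × Bool := (e.2.1, e.1, e.2.2)

/-- The reversed digraph `Γ_rev`, with all edge directions reversed but types
and labels kept. -/
def rev : SLabeledDigraph V B where
  Edge a b s d := Γ.Edge b a s d
  no_loop v s d := Γ.no_loop v s d
  unique_edge v s := by
    obtain ⟨e, ⟨hinc, hedge⟩, huniq⟩ := Γ.unique_edge v s
    refine ⟨eswap e, ⟨Or.symm hinc, hedge⟩, ?_⟩
    rintro e' ⟨hinc', hedge'⟩
    have h1 : eswap e' = e := huniq (eswap e') ⟨Or.symm hinc', hedge'⟩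
    calc e' = eswap (eswap e') := rfl
    _ = eswap e := by rw [h1]

/-- The restriction `Γ_J`: same vertices, only edges with labels in `J`. -/
def restrict (J : Set B) : SLabeledDigraph V J where
  Edge a b s d := Γ.Edge a b s.1 d
  no_loop v s d := Γ.no_loop v s.1 d
  unique_edge v s := Γ.unique_edge v s.1

/-- Directed adjacency (ignoring labels and edge types). -/
def DAdj (a b : V) : Prop := ∃ s d, Γ.Edge a b s d

/-- Undirected adjacency. -/
def UAdj (a b : V) : Prop := Γ.DAdj a b ∨ Γ.DAdj b a

/-- `Γ` is connected if any two vertices are joined by an undirected path. -/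
def Connected : Prop := ∀ a b : V, Relation.ReflTransGen Γ.UAdj a b

/-- A source is a vertex at which no edge ends. -/
def IsSource (a : V) : Prop := ∀ b s d, ¬ Γ.Edge b a s d

/-- A sink is a vertex at which no edge begins. -/
def IsSink (a : V) : Prop := ∀ b s d, ¬ Γ.Edge a b s d

/-- `Γ` is acyclic if it has no nonempty directed circuit. -/
def Acyclic : Prop := ∀ a : V, ¬ Relation.TransGen Γ.DAdj a a

/-- The setoid whose classes are the connected components of `Γ`. -/
def compSetoid : Setoid V :=
  ⟨Relation.ReflTransGen Γ.UAdj,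
    ⟨fun _ => Relation.ReflTransGen.refl,
     fun h => by
       induction h with
       | refl => exact Relation.ReflTransGen.refl
       | tail _ hbc ih => exact Relation.ReflTransGen.head (Or.symm hbc) ih,
     fun h1 h2 => Relation.ReflTransGen.trans h1 h2⟩⟩

end SLabeledDigraph

/-- The Hecke algebra of a Coxeter system over `ℚ(u)`: an associative
`ℚ(u)`-algebra `H` with basis `{T_w : w ∈ W}` such that `T_1 = 1` and
`T_s T_w = T_{sw}` if `ℓ(sw) > ℓ(w)`, while
`T_s T_w = u² T_{sw} + (u² - 1) T_w` if `ℓ(sw) < ℓ(w)`. -/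
structure HeckeAlgebra {B W : Type*} [Group W] {M : CoxeterMatrix B}
    (cs : CoxeterSystem M W) (H : Type*) [Ring H] [Algebra Kq H] where
  T : W → H
  basis : Module.Basis W Kq H
  basis_eq : ∀ w, basis w = T w
  T_one : T 1 = 1
  T_mul_of_lt : ∀ (i : B) (w : W), cs.length w < cs.length (cs.simple i * w) →
    T (cs.simple i) * T w = T (cs.simple i * w)
  T_mul_of_gt : ∀ (i : B) (w : W), cs.length (cs.simple i * w) < cs.length w →
    T (cs.simple i) * T w = (uu ^ 2) • T (cs.simple i * w) + (uu ^ 2 - 1) • T w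

variable {B W : Type*} [Group W] {M : CoxeterMatrix B}
variable {H : Type*} [Ring H] [Algebra Kq H]

/-- `ρ` is the representation of `H` on `M(Γ)` (the `ℚ(u)`-vector space with
basis the vertices of `Γ`) in which each `T_s` acts by the operator `τ_s`
determined by the edges of `Γ`. -/
def WDigraphRep {V : Type*} (cs : CoxeterSystem M W) (ha : HeckeAlgebra cs H)
    (Γ : SLabeledDigraph V B)
    (ρ : H →ₐ[Kq] Module.End Kq (V →₀ Kq)) : Prop :=
  ∀ (a b : V) (i : B),
    (Γ.Edge a b i false →
      ρ (ha.T (cs.simple i)) (single a (1 : Kq)) = single b (1 : Kq) ∧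
      ρ (ha.T (cs.simple i)) (single b (1 : Kq))
        = (uu ^ 2 - 1) • single b (1 : Kq) + (uu ^ 2) • single a (1 : Kq)) ∧
    (Γ.Edge a b i true →
      ρ (ha.T (cs.simple i)) (single a (1 : Kq)) = uu • single a (1 : Kq) + (uu + 1) • single b (1 : Kq) ∧
      ρ (ha.T (cs.simple i)) (single b (1 : Kq))
        = (uu ^ 2 - uu - 1) • single b (1 : Kq) + (uu ^ 2 - uu) • single a (1 : Kq))

/-- `Γ` is a `W`-digraph: the assignment `T_s ↦ τ_s` extends to a
representation of `H` on `M(Γ)`. -/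
def IsWDigraph {V : Type*} (cs : CoxeterSystem M W) (ha : HeckeAlgebra cs H)
    (Γ : SLabeledDigraph V B) : Prop :=
  ∃ ρ : H →ₐ[Kq] Module.End Kq (V →₀ Kq), WDigraphRep cs ha Γ ρ


namespace AddValuation

variable {K : Type*} [Field K] (v : AddValuation K (WithTop ℤ))

theorem map_eq_zero_of_one_le_map_sub_one {c : K} (hc : 1 ≤ v (c - 1)) : v c = 0 := by
  have hne : v 1 ≠ v (c - 1) := by
    rw [v.map_one]
    exact (zero_lt_one.trans_le hc).ne
  rw [← add_sub_cancel 1 c, v.map_add_of_distinct_val hne, v.map_one]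
  exact min_eq_left (zero_le_one.trans hc)

theorem le_map_of_mul_add_eq {c a b r : K} (hc : v c = 0) (h : c * (a + b) = r)
    {n : WithTop ℤ} (hr : n ≤ v r) (ha : n ≤ v a) : n ≤ v b := by
  have hcb : c * b = r - c * a := by rw [← h]; ring
  calc n ≤ min (v r) (v (c * a)) := le_min hr (by rwa [v.map_mul, hc, zero_add])
    _ ≤ v (r - c * a) := v.map_sub _ _
    _ = v b := by rw [← hcb, v.map_mul, hc, zero_add]

theorem map_add_one_le_of_mul_add_eq {π c a b : K} (hπ : 1 ≤ v π) (hc : 1 ≤ v (c - 1))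
    (h : π * a + a = c * (a + b)) : v a + 1 ≤ v b := by
  have hcb : c * b = (π - (c - 1)) * a := by linear_combination -h
  calc v a + 1 ≤ v a + v (π - (c - 1)) :=
        add_le_add_right ((le_min hπ hc).trans (v.map_sub _ _)) _
    _ = v b := by
      rw [add_comm, ← v.map_mul, ← hcb, v.map_mul, v.map_eq_zero_of_one_le_map_sub_one hc,
        zero_add]

end AddValuation

section

-- for the scoped instance `Algebra (RatFunc ℚ) (LaurentSeries ℚ)`
open scoped RatFunc

def uVal : AddValuation Kq (WithTop ℤ) :=
  (HahnSeries.addVal ℤ ℚ).comap (algebraMap Kq (LaurentSeries ℚ))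

theorem uVal_apply (r : Kq) : uVal r = (algebraMap Kq (LaurentSeries ℚ) r).orderTop := rfl

theorem uVal_uu : uVal uu = 1 := by
  rw [uVal_apply, uu, RatFunc.coe_X, HahnSeries.orderTop_single one_ne_zero]
  rfl

theorem uVal_algebraMap_nonneg (c : ℚ) : 0 ≤ uVal (algebraMap ℚ Kq c) := by
  rw [uVal_apply, eq_ratCast (algebraMap ℚ Kq), map_ratCast, ← map_ratCast HahnSeries.C c]
  exact HahnSeries.orderTop_single_le

end

namespace SLabeledDigraph

open Relation

variable {V : Type*} (Γ : SLabeledDigraph V B)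

def scc (a : V) : Set V := {v | ReflTransGen Γ.DAdj a v ∧ ReflTransGen Γ.DAdj v a}

def sccLabels (a : V) : Set B := {s | ∃ v ∈ Γ.scc a, ∃ w ∈ Γ.scc a, ∃ d, Γ.Edge v w s d}

theorem self_mem_scc (a : V) : a ∈ Γ.scc a := ⟨.refl, .refl⟩

theorem scc_induction {a w : V} (P : V → Prop) (hw : w ∈ Γ.scc a) (hPw : P w)
    (step : ∀ v v' s d, v ∈ Γ.scc a → v' ∈ Γ.scc a → Γ.Edge v v' s d → P v → P v')
    {v : V} (hv : v ∈ Γ.scc a) : P v := by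
  suffices ∀ z, ReflTransGen Γ.DAdj w z → z ∈ Γ.scc a → P z from
    this v (hw.2.trans hv.1) hv
  intro z hwz
  induction hwz with
  | refl => exact fun _ => hPw
  | @tail z z' hwz hzz' ih =>
    intro hz'
    have hz : z ∈ Γ.scc a := ⟨hw.1.trans hwz, .head hzz' hz'.2⟩
    obtain ⟨s, d, hedge⟩ := hzz'
    exact step z z' s d hz hz' hedge (ih hz)

theorem eq_top_of_not_sccLabels_subset [Finite V] {Ψ : Type*} [Finite Ψ] (I : Ψ → Set B)
    (f : V → Ψ → WithTop ℤ)
    (hgain : ∀ v w s d x, Γ.Edge v w s d → s ∉ I x → f v x + 1 ≤ f w x)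
    (hcarry : ∀ v w s d x (n : WithTop ℤ), Γ.Edge v w s d → s ∈ I x → n ≤ f v x →
      (∀ y, s ∉ I y → n ≤ f v y + 1) → n ≤ f w x)
    {a v : V} (hv : v ∈ Γ.scc a) {x : Ψ} (hx : ¬ Γ.sccLabels a ⊆ I x) : f v x = ⊤ := by
  set S : Set (V × Ψ) := {p | p.1 ∈ Γ.scc a ∧ ¬ Γ.sccLabels a ⊆ I p.2}
  obtain ⟨⟨v₀, x₀⟩, hp₀, hmin⟩ :=
    S.exists_min_image (fun p => f p.1 p.2) S.toFinite ⟨(v, x), hv, hx⟩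
  set n := f v₀ x₀
  -- From an edge of the component whose label misses `I x`, the bound `n + 1` spreads over it.
  have hS : ∀ p ∈ S, n + 1 ≤ f p.1 p.2 := by
    rintro ⟨v, x⟩ ⟨hv, hx⟩
    obtain ⟨s, ⟨v₁, hv₁, w₁, hw₁, d, hedge⟩, hsx⟩ := Set.not_subset.mp hx
    refine Γ.scc_induction (fun z => n + 1 ≤ f z x) hw₁
      ((add_le_add_left (hmin (v₁, x) ⟨hv₁, hx⟩) 1).trans (hgain _ _ _ _ _ hedge hsx)) ?_ hv
    intro z z' s' d' hz hz' hedge' hPz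
    by_cases hs' : s' ∈ I x
    · refine hcarry _ _ _ _ _ _ hedge' hs' hPz fun y hy => ?_
      exact add_le_add_left
        (hmin (z, y) ⟨hz, fun hsub => hy (hsub ⟨z, hz, z', hz', d', hedge'⟩)⟩) 1
    · exact (add_le_add_left (hmin (z, x) ⟨hz, hx⟩) 1).trans (hgain _ _ _ _ _ hedge' hs')
  have hn : n = ⊤ := by
    by_contra hne
    obtain ⟨k, hk⟩ := WithTop.ne_top_iff_exists.mp hne
    have h : n + 1 ≤ n := hS _ hp₀
    rw [← hk] at h
    norm_cast at h
    omega
  exact top_le_iff.mp (hn ▸ hmin (v, x) ⟨hv, hx⟩)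

end SLabeledDigraph

section WGraph

variable {K Ψ : Type*} [CommRing K] [Fintype Ψ] (I : Ψ → Set B) (μ : Ψ → Ψ → K) (q : K) (s : B)
  (T : Module.End K (Ψ →₀ K))

open scoped Classical in
theorem wgraph_action_apply
    (hT : ∀ x, T (single x 1) =
      if s ∈ I x then -single x 1
      else q ^ 2 • single x 1 + q • ∑ y ∈ Finset.univ.filter (fun y => s ∈ I y),
        μ y x • single y 1)
    (g : Ψ →₀ K) (x : Ψ) :
    T g x = if s ∈ I x then -g x + q * ∑ y ∈ Finset.univ.filter (fun y => s ∉ I y), μ x y * g y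
      else q ^ 2 * g x := by
  induction g using Finsupp.induction_linear with
  | zero => simp
  | add g g' hg hg' =>
    simp only [map_add, Finsupp.add_apply, hg, hg', mul_add, Finset.sum_add_distrib]
    split_ifs <;> ring
  | single z r =>
    rw [← mul_one r, ← Finsupp.smul_single', map_smul, Finsupp.smul_apply, hT z]
    obtain rfl | hzx := eq_or_ne z x
    · by_cases hz : s ∈ I z <;> simp [hz, Finsupp.single_apply, mul_comm]
    · by_cases hz : s ∈ I z <;> by_cases hx : s ∈ I x <;>
        simp [hz, hx, hzx, Finsupp.single_apply, Finset.sum_ite_eq', mul_left_comm, mul_comm]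

open scoped Classical in
theorem wgraph_action_eq_neg
    (hT : ∀ x, T (single x 1) =
      if s ∈ I x then -single x 1
      else q ^ 2 • single x 1 + q • ∑ y ∈ Finset.univ.filter (fun y => s ∈ I y),
        μ y x • single y 1)
    {g : Ψ →₀ K} (hg : ∀ x, s ∉ I x → g x = 0) : T g = -g := by
  ext x
  rw [wgraph_action_apply I μ q s T hT, Finsupp.neg_apply]
  split_ifs with hx
  · rw [Finset.sum_eq_zero fun y hy => by rw [hg y (Finset.mem_filter.mp hy).2, mul_zero]]
    ring
  · rw [hg x hx, mul_zero, neg_zero]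

end WGraph

open scoped Classical in
def IsWGraphRep (cs : CoxeterSystem M W) (ha : HeckeAlgebra cs H) {Ψ : Type*} [Fintype Ψ]
    (I : Ψ → Set B) (μ : Ψ → Ψ → ℚ) (ρΨ : H →ₐ[Kq] Module.End Kq (Ψ →₀ Kq)) : Prop :=
  ∀ (i : B) (x : Ψ),
    ρΨ (ha.T (cs.simple i)) (single x (1 : Kq)) =
      if i ∈ I x then - single x (1 : Kq)
      else uu ^ 2 • single x (1 : Kq) +
        uu • ∑ y ∈ Finset.univ.filter (fun y => i ∈ I y),
          (algebraMap ℚ Kq (μ y x)) • single y (1 : Kq)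

section Transfer

variable {V Ψ : Type*} {cs : CoxeterSystem M W} {ha : HeckeAlgebra cs H}
  {Γ : SLabeledDigraph V B} {ρ : H →ₐ[Kq] Module.End Kq (V →₀ Kq)} {I : Ψ → Set B}
  {μ : Ψ → Ψ → ℚ} {ρΨ : H →ₐ[Kq] Module.End Kq (Ψ →₀ Kq)} {e : (V →₀ Kq) ≃ₗ[Kq] (Ψ →₀ Kq)}

open scoped Classical in
theorem IsWGraphRep.apply_apply [Fintype Ψ] (hΨ : IsWGraphRep cs ha I μ ρΨ) (s : B)
    (g : Ψ →₀ Kq) (x : Ψ) :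
    ρΨ (ha.T (cs.simple s)) g x =
      if s ∈ I x then
        -g x + uu * ∑ y ∈ Finset.univ.filter (fun y => s ∉ I y), algebraMap ℚ Kq (μ x y) * g y
      else uu ^ 2 * g x :=
  wgraph_action_apply I (fun y x => algebraMap ℚ Kq (μ y x)) uu s _ (hΨ s) g x

theorem WDigraphRep.exists_apply_add_self (hρ : WDigraphRep cs ha Γ ρ) {v w : V} {s : B}
    {d : Bool} (hvw : Γ.Edge v w s d) :
    ∃ c : Kq, 1 ≤ uVal (c - 1) ∧
      ρ (ha.T (cs.simple s)) (single v 1) + single v 1 = c • (single v 1 + single w 1) := by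
  cases d
  · refine ⟨1, by simp, ?_⟩
    rw [((hρ v w s).1 hvw).1, one_smul, add_comm]
  · refine ⟨uu + 1, by rw [add_sub_cancel_right, uVal_uu], ?_⟩
    rw [((hρ v w s).2 hvw).1]
    simp only [smul_add, add_smul, one_smul]
    abel

theorem WDigraphRep.apply_ne_neg (hρ : WDigraphRep cs ha Γ ρ) {v w : V} {s : B} {d : Bool}
    (hvw : Γ.Edge v w s d) : ρ (ha.T (cs.simple s)) (single v 1) ≠ -single v 1 := by
  intro hneg
  obtain ⟨c, hc, hrel⟩ := hρ.exists_apply_add_self hvw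
  rw [hneg, neg_add_cancel, eq_comm, smul_eq_zero] at hrel
  rcases hrel with hc0 | hsum
  · exact not_le.mpr zero_lt_one (by simpa [hc0] using hc)
  · have hw := congrArg (· w) hsum
    simp [show v ≠ w from fun h => Γ.no_loop v s d (h ▸ hvw)] at hw

theorem WDigraphRep.exists_coord_apply_add_self (hρ : WDigraphRep cs ha Γ ρ)
    (he : ∀ (h : H) (v : V →₀ Kq), e (ρ h v) = ρΨ h (e v)) {v w : V} {s : B} {d : Bool}
    (hvw : Γ.Edge v w s d) :
    ∃ c : Kq, 1 ≤ uVal (c - 1) ∧ ∀ x,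
      ρΨ (ha.T (cs.simple s)) (e (single v 1)) x + e (single v 1) x
        = c * (e (single v 1) x + e (single w 1) x) := by
  obtain ⟨c, hc, hrel⟩ := hρ.exists_apply_add_self hvw
  refine ⟨c, hc, fun x => ?_⟩
  simpa only [map_add, map_smul, he, Finsupp.add_apply, Finsupp.smul_apply, smul_eq_mul] using
    congrArg (fun g => e g x) hrel

open scoped Classical in
theorem coord_eq_zero_of_mem_scc [Finite V] [Fintype Ψ] (hρ : WDigraphRep cs ha Γ ρ)
    (hΨ : IsWGraphRep cs ha I μ ρΨ) (he : ∀ (h : H) (v : V →₀ Kq), e (ρ h v) = ρΨ h (e v))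
    {a v : V} (hv : v ∈ Γ.scc a) {x : Ψ} (hx : ¬ Γ.sccLabels a ⊆ I x) :
    e (single v 1) x = 0 := by
  refine uVal.top_iff.mp
    (Γ.eq_top_of_not_sccLabels_subset I (fun v x => uVal (e (single v 1) x)) ?_ ?_ hv hx)
  · intro v w s d x hvw hsx
    obtain ⟨c, hc, hrel⟩ := hρ.exists_coord_apply_add_self he hvw
    have h := hrel x
    rw [hΨ.apply_apply, if_neg hsx] at h
    exact uVal.map_add_one_le_of_mul_add_eq (by rw [uVal.map_pow, uVal_uu]; decide) hc h
  · intro v w s d x n hvw hsx hnx hny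
    obtain ⟨c, hc, hrel⟩ := hρ.exists_coord_apply_add_self he hvw
    have h := hrel x
    rw [hΨ.apply_apply, if_pos hsx, neg_add_cancel_comm] at h
    refine uVal.le_map_of_mul_add_eq (uVal.map_eq_zero_of_one_le_map_sub_one hc) h.symm ?_ hnx
    rw [Finset.mul_sum]
    refine uVal.map_le_sum fun y hy => ?_
    calc n ≤ uVal (e (single v 1) y) + 1 := hny y (Finset.mem_filter.mp hy).2
      _ ≤ uVal (uu * (algebraMap ℚ Kq (μ x y) * e (single v 1) y)) := by
        rw [uVal.map_mul, uVal.map_mul, uVal_uu, add_comm]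
        exact add_le_add_right (le_add_of_nonneg_left (uVal_algebraMap_nonneg _)) 1

end Transfer

open scoped Classical in
theorem wdigraph_acyclic_of_wgraph_general {V : Type*} [Finite V]
    (cs : CoxeterSystem M W) (ha : HeckeAlgebra cs H)
    (Γ : SLabeledDigraph V B)
    (ρ : H →ₐ[Kq] Module.End Kq (V →₀ Kq)) (hρ : WDigraphRep cs ha Γ ρ)
    (Ψ : Type*) [Fintype Ψ] (I : Ψ → Set B) (μ : Ψ → Ψ → ℚ)
    (ρΨ : H →ₐ[Kq] Module.End Kq (Ψ →₀ Kq))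
    (hΨ : ∀ (i : B) (x : Ψ),
      ρΨ (ha.T (cs.simple i)) (single x (1 : Kq)) =
        if i ∈ I x then - single x (1 : Kq)
        else uu ^ 2 • single x (1 : Kq) +
          uu • ∑ y ∈ Finset.univ.filter (fun y => i ∈ I y),
            (algebraMap ℚ Kq (μ y x)) • single y (1 : Kq))
    (e : (V →₀ Kq) ≃ₗ[Kq] (Ψ →₀ Kq))
    (he : ∀ (h : H) (v : V →₀ Kq), e (ρ h v) = ρΨ h (e v)) :
    Γ.Acyclic := by
  intro a hcyc
  obtain ⟨b, ⟨s, d, hab⟩, hba⟩ := Relation.TransGen.head'_iff.mp hcyc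
  have hs : s ∈ Γ.sccLabels a := ⟨a, Γ.self_mem_scc a, b, ⟨.single ⟨s, d, hab⟩, hba⟩, d, hab⟩
  have hsupp : ∀ x, s ∉ I x → e (single a 1) x = 0 := fun x hx =>
    coord_eq_zero_of_mem_scc hρ hΨ he (Γ.self_mem_scc a) fun hsub => hx (hsub hs)
  apply hρ.apply_ne_neg hab
  apply e.injective
  rw [he, map_neg]
  exact wgraph_action_eq_neg I _ uu s _ (hΨ s) hsupp

open scoped Classical in
/-- Suppose `W_J` is finite for every proper subset `J ⊊ S`,
`Γ` is a connected `W`-digraph with finite vertex set, and the `H`-module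
`M(Γ)` is isomorphic to the module afforded by a `W`-graph
`(Ψ, I, μ)` over `ℚ` (in the sense of Kazhdan–Lusztig).  Then `Γ` is acyclic. -/
theorem wdigraph_acyclic_of_wgraph {V : Type*} [Finite V]
    (cs : CoxeterSystem M W) (ha : HeckeAlgebra cs H)
    (hparab : ∀ J : Set B, J ≠ Set.univ → Finite (Subgroup.closure (cs.simple '' J)))
    (Γ : SLabeledDigraph V B) (hconn : Γ.Connected)
    (ρ : H →ₐ[Kq] Module.End Kq (V →₀ Kq)) (hρ : WDigraphRep cs ha Γ ρ)
    (Ψ : Type*) [Fintype Ψ] (I : Ψ → Set B) (μ : Ψ → Ψ → ℚ)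
    (ρΨ : H →ₐ[Kq] Module.End Kq (Ψ →₀ Kq))
    (hΨ : ∀ (i : B) (x : Ψ),
      ρΨ (ha.T (cs.simple i)) (single x (1 : Kq)) =
        if i ∈ I x then - single x (1 : Kq)
        else uu ^ 2 • single x (1 : Kq) +
          uu • ∑ y ∈ Finset.univ.filter (fun y => i ∈ I y),
            (algebraMap ℚ Kq (μ y x)) • single y (1 : Kq))
    (e : (V →₀ Kq) ≃ₗ[Kq] (Ψ →₀ Kq))
    (he : ∀ (h : H) (v : V →₀ Kq), e (ρ h v) = ρΨ h (e v)) :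
    Γ.Acyclic :=
  wdigraph_acyclic_of_wgraph_general cs ha Γ ρ hρ Ψ I μ ρΨ hΨ e he
end
end

section
/- Let (W,S) be a Coxeter system, H its Hecke algebra over ℚ(u), M an H-module, and X ⊆ M a subset that supports a W-digraph. Then: (i) for every s ∈ S and α ∈ X, the five elements α, T_sα, T_s^{-1}α, T_s°α, (T_s°)^{-1}α are pairwise distinct, and X contains exactly one element of the set {T_sα, T_s^{-1}α, T_s°α, (T_s°)^{-1}α}; (ii) the ℚ(u)-linear span of X is an H-submodule of M. -/
open Finsupp

set_option synthInstance.maxHeartbeats 1000000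
set_option maxHeartbeats 1000000

noncomputable section

variable {B W : Type*} [Group W] {M : CoxeterMatrix B}
variable {H : Type*} [Ring H] [Algebra Kq H]

/-- The element `T_s° = (u+1)⁻¹ (T_s - u)` of `H`, for `s = simple i`. -/
def Tcirc (cs : CoxeterSystem M W) (ha : HeckeAlgebra cs H) (i : B) : H :=
  (uu + 1)⁻¹ • (ha.T (cs.simple i) - uu • (1 : H))

/-- A subset `X` of the `H`-module given by `ρ` *supports a `W`-digraph* if it
is linearly independent and, for each `α ∈ X` and `s ∈ S`, at least one of
`T_s α`, `T_s⁻¹ α`, `T_s° α`, `(T_s°)⁻¹ α` lies in `X`. -/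
def SupportsWDigraph {Mo : Type*} [AddCommGroup Mo] [Module Kq Mo]
    (cs : CoxeterSystem M W) (ha : HeckeAlgebra cs H)
    (ρ : H →ₐ[Kq] Module.End Kq Mo) (X : Set Mo) : Prop :=
  LinearIndependent Kq (fun x : X => (x : Mo)) ∧
  ∀ α ∈ X, ∀ i : B,
    (ρ (ha.T (cs.simple i)) α ∈ X ∨
     ρ (Ring.inverse (ha.T (cs.simple i))) α ∈ X ∨
     ρ (Tcirc cs ha i) α ∈ X ∨
     ρ (Ring.inverse (Tcirc cs ha i)) α ∈ X)

/-!
Each of `T_s`, `T_s⁻¹`, `T_s°`, `(T_s°)⁻¹` has the form `c (T_s - a)` with `c ≠ 0`, so for `α ∈ X`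
the four elements are `-c a α + c T_s α`. If `T_s α = λ α`, the quadratic relation forces
`λ ∈ {u², -1}`, and the member of `X` among the four would be a multiple of `α` other than `α`;
hence `α` and `T_s α` are independent, and the five elements are told apart by their
`T_s α`-coefficients `0, 1, u⁻², (u+1)⁻¹, (u²-u)⁻¹`. Two members of `X` among the four would,
together with `α`, be three elements of `X` in the plane spanned by `α` and `T_s α`. That plane is
also spanned by `α` and the member of `X`, so `span X` is stable under every `T_s`, and the `T_s`
generate `H`.
-/

-- The inverses of the `T_s α`-coefficients listed above; evaluation at `u = 3` separates them.
open Polynomial in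
lemma nodup_denominators : [0, 1, uu ^ 2, uu + 1, uu ^ 2 - uu].Nodup := by
  have hpoly : ([0, 1, X ^ 2, X + 1, X ^ 2 - X] : List ℚ[X]).Nodup :=
    List.Nodup.of_map (eval 3) (by norm_num)
  simpa [uu, RatFunc.algebraMap_X] using hpoly.map (RatFunc.algebraMap_injective ℚ)

lemma uu_sq_ne_zero : uu ^ 2 ≠ 0 := pow_ne_zero 2 RatFunc.X_ne_zero

lemma uu_add_one_ne_zero : uu + 1 ≠ 0 := by
  have h := nodup_denominators
  simp only [List.nodup_cons, List.mem_cons, List.not_mem_nil] at h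
  grind

lemma uu_sq_sub_uu_ne_zero : uu ^ 2 - uu ≠ 0 := by
  have h := nodup_denominators
  simp only [List.nodup_cons, List.mem_cons, List.not_mem_nil] at h
  grind

lemma uu_sq_ne_one : uu ^ 2 ≠ 1 := by
  have h := nodup_denominators
  simp only [List.nodup_cons, List.mem_cons, List.not_mem_nil] at h
  grind

lemma uu_add_one_ne_uu_sq_sub_uu : uu + 1 ≠ uu ^ 2 - uu := by
  have h := nodup_denominators
  simp only [List.nodup_cons, List.mem_cons, List.not_mem_nil] at h
  grind

section QuadraticInverse

variable {K A : Type*} [Field K] [Ring A] [Algebra K A] {T : A} {p q : K}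

theorem sub_smul_one_mul_sub_smul_one (hT : T * T = p • 1 + q • T) {a b : K}
    (hab : a + b = q) : (T - a • 1) * (T - b • 1) = (p + a * b) • (1 : A) := by
  obtain rfl : q = a + b := hab.symm
  simp only [sub_mul, mul_sub, smul_mul_assoc, mul_smul_comm, one_mul, mul_one, hT]
  module

theorem ringInverse_smul_sub_smul_one (hT : T * T = p • 1 + q • T) {a b c : K}
    (hab : a + b = q) (hc : c ≠ 0) (hd : p + a * b ≠ 0) :
    Ring.inverse (c • (T - a • 1)) = (c * (p + a * b))⁻¹ • (T - b • 1) := by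
  have hcd : c * (p + a * b) ≠ 0 := mul_ne_zero hc hd
  let u : Aˣ :=
    { val := c • (T - a • 1)
      inv := (c * (p + a * b))⁻¹ • (T - b • 1)
      val_inv := by
        rw [smul_mul_smul_comm, sub_smul_one_mul_sub_smul_one hT hab, smul_smul, mul_right_comm,
          mul_inv_cancel₀ hcd, one_smul]
      inv_val := by
        rw [smul_mul_smul_comm, sub_smul_one_mul_sub_smul_one hT (by rw [add_comm, hab]),
          smul_smul, mul_comm b a, mul_assoc, inv_mul_cancel₀ hcd, one_smul] }
  exact Ring.inverse_unit u

end QuadraticInverse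

namespace HeckeAlgebra

variable {cs : CoxeterSystem M W} (ha : HeckeAlgebra cs H)

theorem T_simple_mul_self (i : B) :
    ha.T (cs.simple i) * ha.T (cs.simple i)
      = (uu ^ 2) • (1 : H) + (uu ^ 2 - 1) • ha.T (cs.simple i) := by
  have h := ha.T_mul_of_gt i (cs.simple i) (by simp)
  rwa [cs.simple_mul_simple_self, ha.T_one] at h

theorem ringInverse_T_simple (i : B) :
    Ring.inverse (ha.T (cs.simple i))
      = (uu ^ 2)⁻¹ • (ha.T (cs.simple i) - (uu ^ 2 - 1) • 1) := by
  simpa using ringInverse_smul_sub_smul_one (ha.T_simple_mul_self i) (zero_add _) one_ne_zero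
    (by simpa using uu_sq_ne_zero)

theorem ringInverse_Tcirc (i : B) :
    Ring.inverse (Tcirc cs ha i)
      = (uu ^ 2 - uu)⁻¹ • (ha.T (cs.simple i) - (uu ^ 2 - uu - 1) • 1) := by
  have hd : uu ^ 2 + uu * (uu ^ 2 - uu - 1) = (uu + 1) * (uu ^ 2 - uu) := by ring
  rw [Tcirc, ringInverse_smul_sub_smul_one (ha.T_simple_mul_self i) (b := uu ^ 2 - uu - 1)
    (by ring) (inv_ne_zero uu_add_one_ne_zero)
    (by rw [hd]; exact mul_ne_zero uu_add_one_ne_zero uu_sq_sub_uu_ne_zero), hd,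
    inv_mul_cancel_left₀ uu_add_one_ne_zero]

theorem adjoin_range_T_simple :
    Algebra.adjoin Kq (Set.range fun i => ha.T (cs.simple i)) = ⊤ := by
  set A := Algebra.adjoin Kq (Set.range fun i => ha.T (cs.simple i))
  have hT : ∀ w, ha.T w ∈ A := fun w => by
    refine cs.simple_induction_left (p := (ha.T · ∈ A)) w (by rw [ha.T_one]; exact one_mem A)
      fun w i hw => ?_
    have hs : ha.T (cs.simple i) ∈ A := Algebra.subset_adjoin ⟨i, rfl⟩
    rcases (cs.length_simple_mul_ne w i).lt_or_gt with h | h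
    · have hsw : ha.T (cs.simple i * w)
          = (uu ^ 2)⁻¹ • (ha.T (cs.simple i) * ha.T w - (uu ^ 2 - 1) • ha.T w) := by
        rw [ha.T_mul_of_gt i w h, add_sub_cancel_right, smul_smul,
          inv_mul_cancel₀ uu_sq_ne_zero, one_smul]
      rw [hsw]
      exact A.smul_mem (A.sub_mem (A.mul_mem hs hw) (A.smul_mem hw _)) _
    · rw [← ha.T_mul_of_lt i w h]
      exact A.mul_mem hs hw
  have hspan : Submodule.span Kq (Set.range ha.basis) ≤ Subalgebra.toSubmodule A :=
    Submodule.span_le.2 <| Set.range_subset_iff.2 fun w => by rw [ha.basis_eq]; exact hT w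
  rw [ha.basis.span_eq] at hspan
  exact eq_top_iff.2 fun h _ => hspan Submodule.mem_top

end HeckeAlgebra

section LinearIndepOn

variable {K V : Type*} [Field K] [AddCommGroup V] [Module K V] {X : Set V} {x y z : V}

theorem LinearIndepOn.eq_or_eq_of_mem_span_pair (hX : LinearIndepOn K id X) (hx : x ∈ X)
    (hy : y ∈ X) (hz : z ∈ X) (hzs : z ∈ Submodule.span K {x, y}) : z = x ∨ z = y := by
  by_contra! h
  refine hX.notMem_span hz (Submodule.span_mono ?_ (by simpa using hzs))
  simp only [Set.image_id, Set.insert_subset_iff, Set.singleton_subset_iff, Set.mem_sdiff,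
    Set.mem_singleton_iff]
  exact ⟨⟨hx, h.1.symm⟩, hy, h.2.symm⟩

theorem LinearIndepOn.eq_one_of_smul_mem (hX : LinearIndepOn K id X) (hx : x ∈ X) {μ : K}
    (hμ : μ • x ∈ X) : μ = 1 := by
  have hx0 : x ≠ 0 := hX.ne_zero hx
  have h : μ • x = x := by
    simpa using hX.eq_or_eq_of_mem_span_pair hx hx hμ
      (Submodule.smul_mem _ μ (Submodule.subset_span (by simp)))
  exact smul_left_injective K hx0 (by simpa using h)

end LinearIndepOn

theorem smul_add_smul_mem_span_pair {K V : Type*} [Field K] [AddCommGroup V] [Module K V]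
    (x w : V) (d d' c' : K) {c : K} (hc : c ≠ 0) :
    d' • x + c' • w ∈ Submodule.span K {x, d • x + c • w} :=
  Submodule.mem_span_pair.2
    ⟨d' - c' * c⁻¹ * d, c' * c⁻¹, by match_scalars <;> field_simp; ring⟩

theorem AlgHom.smul_sub_smul_one_apply {R A V : Type*} [CommRing R] [Ring A] [Algebra R A]
    [AddCommGroup V] [Module R V] (ρ : A →ₐ[R] Module.End R V) (x : A) (c a : R) (v : V) :
    ρ (c • (x - a • 1)) v = (-(c * a)) • v + c • ρ x v := by
  simp only [map_smul, map_sub, map_one, LinearMap.smul_apply, LinearMap.sub_apply,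
    Module.End.one_apply]
  module

section Representation

variable {Mo : Type*} [AddCommGroup Mo] [Module Kq Mo] {cs : CoxeterSystem M W}
  {ha : HeckeAlgebra cs H} {ρ : H →ₐ[Kq] Module.End Kq Mo}

theorem eq_or_eq_of_T_simple_apply_eq_smul {i : B} {v : Mo} {μ : Kq} (hv : v ≠ 0)
    (h : ρ (ha.T (cs.simple i)) v = μ • v) : μ = uu ^ 2 ∨ μ = -1 := by
  have hsq := congrArg (ρ · v) (ha.T_simple_mul_self i)
  simp only [map_mul, Module.End.mul_apply, h, map_smul, LinearMap.smul_apply, map_add, map_one,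
    LinearMap.add_apply, Module.End.one_apply, smul_smul] at hsq
  have h0 : ((μ - uu ^ 2) * (μ + 1)) • v = 0 := by
    rw [show (μ - uu ^ 2) * (μ + 1) = μ * μ - (uu ^ 2 + (uu ^ 2 - 1) * μ) by ring, sub_smul,
      add_smul, ← hsq, sub_self]
  rcases mul_eq_zero.1 ((smul_eq_zero.1 h0).resolve_right hv) with h1 | h1
  · exact Or.inl (sub_eq_zero.1 h1)
  · exact Or.inr (eq_neg_of_add_eq_zero_left h1)

variable (cs ha ρ) in
def candidateNeighbours (i : B) (α : Mo) : Set Mo :=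
  {ρ (ha.T (cs.simple i)) α, ρ (Ring.inverse (ha.T (cs.simple i))) α,
    ρ (Tcirc cs ha i) α, ρ (Ring.inverse (Tcirc cs ha i)) α}

-- `c * (-1 - a)` and `c * (u² - a)` are the eigenvalues of `c (T_s - a)` on eigenvectors of `T_s`
-- for `-1` and `u²`.
theorem exists_smul_sub_smul_one_of_mem_candidateNeighbours {i : B} {α y : Mo}
    (hy : y ∈ candidateNeighbours cs ha ρ i α) :
    ∃ c a : Kq, c ≠ 0 ∧ c * (-1 - a) = -1 ∧ c * (uu ^ 2 - a) ≠ 1 ∧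
      y = ρ (c • (ha.T (cs.simple i) - a • 1)) α := by
  rcases hy with rfl | rfl | rfl | rfl
  · exact ⟨1, 0, one_ne_zero, by ring, by simpa using uu_sq_ne_one, by simp⟩
  · refine ⟨(uu ^ 2)⁻¹, uu ^ 2 - 1, inv_ne_zero uu_sq_ne_zero, ?_, ?_,
      by rw [ha.ringInverse_T_simple]⟩
    · rw [show -1 - (uu ^ 2 - 1) = -uu ^ 2 by ring, mul_neg, inv_mul_cancel₀ uu_sq_ne_zero]
    · simpa [eq_comm] using uu_sq_ne_one
  · refine ⟨(uu + 1)⁻¹, uu, inv_ne_zero uu_add_one_ne_zero, ?_, ?_, rfl⟩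
    · rw [show -1 - uu = -(uu + 1) by ring, mul_neg, inv_mul_cancel₀ uu_add_one_ne_zero]
    · rw [Ne, inv_mul_eq_one₀ uu_add_one_ne_zero]
      exact uu_add_one_ne_uu_sq_sub_uu
  · refine ⟨(uu ^ 2 - uu)⁻¹, uu ^ 2 - uu - 1, inv_ne_zero uu_sq_sub_uu_ne_zero, ?_, ?_,
      by rw [ha.ringInverse_Tcirc]⟩
    · rw [show -1 - (uu ^ 2 - uu - 1) = -(uu ^ 2 - uu) by ring, mul_neg,
        inv_mul_cancel₀ uu_sq_sub_uu_ne_zero]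
    · rw [show uu ^ 2 - (uu ^ 2 - uu - 1) = uu + 1 by ring, Ne,
        inv_mul_eq_one₀ uu_sq_sub_uu_ne_zero]
      exact uu_add_one_ne_uu_sq_sub_uu.symm

namespace SupportsWDigraph

variable {X : Set Mo} (hX : SupportsWDigraph cs ha ρ X)
include hX

section

variable {α : Mo} (hα : α ∈ X) (i : B)
include hα

theorem exists_mem_candidateNeighbours : ∃ y ∈ X, y ∈ candidateNeighbours cs ha ρ i α := by
  rcases hX.2 α hα i with h | h | h | h <;> exact ⟨_, h, by simp [candidateNeighbours]⟩

theorem linearIndependent_pair : LinearIndependent Kq ![α, ρ (ha.T (cs.simple i)) α] := by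
  have hli : LinearIndepOn Kq id X := hX.1
  have hα0 : α ≠ 0 := hli.ne_zero hα
  rw [LinearIndependent.pair_iff' hα0]
  intro μ hμ
  obtain ⟨y, hyX, hy⟩ := hX.exists_mem_candidateNeighbours hα i
  obtain ⟨c, a, -, hneg, hpos, rfl⟩ := exists_smul_sub_smul_one_of_mem_candidateNeighbours hy
  rw [AlgHom.smul_sub_smul_one_apply, ← hμ, smul_smul, ← add_smul] at hyX
  have h1 := hli.eq_one_of_smul_mem hα hyX
  rcases eq_or_eq_of_T_simple_apply_eq_smul hα0 hμ.symm with rfl | rfl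
  · exact hpos (by linear_combination h1)
  · have h2 : (-1 : Kq) = 1 := by linear_combination h1 - hneg
    norm_num at h2

theorem T_simple_apply_mem_span : ρ (ha.T (cs.simple i)) α ∈ Submodule.span Kq X := by
  obtain ⟨y, hyX, hy⟩ := hX.exists_mem_candidateNeighbours hα i
  obtain ⟨c, a, hc, -, -, rfl⟩ := exists_smul_sub_smul_one_of_mem_candidateNeighbours hy
  rw [AlgHom.smul_sub_smul_one_apply] at hyX
  have h := smul_add_smul_mem_span_pair α (ρ (ha.T (cs.simple i)) α) (-(c * a)) 0 1 hc
  rw [zero_smul, zero_add, one_smul] at h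
  exact Submodule.span_mono (Set.pair_subset hα hyX) h

theorem nodup_candidates :
    [α, ρ (ha.T (cs.simple i)) α, ρ (Ring.inverse (ha.T (cs.simple i))) α,
      ρ (Tcirc cs ha i) α, ρ (Ring.inverse (Tcirc cs ha i)) α].Nodup := by
  set β := ρ (ha.T (cs.simple i)) α
  have hf : Function.Injective fun p : Kq × Kq => p.1 • α + p.2 • β := fun p q h =>
    Prod.ext_iff.2 ((hX.linearIndependent_pair hα i).eq_of_pair h)
  have hcoeff : ([(1, 0), (0, 1), (-((uu ^ 2)⁻¹ * (uu ^ 2 - 1)), (uu ^ 2)⁻¹),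
      (-((uu + 1)⁻¹ * uu), (uu + 1)⁻¹),
      (-((uu ^ 2 - uu)⁻¹ * (uu ^ 2 - uu - 1)), (uu ^ 2 - uu)⁻¹)] : List (Kq × Kq)).Nodup :=
    List.Nodup.of_map Prod.snd (by simpa using nodup_denominators.map inv_injective)
  convert hcoeff.map hf using 1
  rw [ha.ringInverse_T_simple, ha.ringInverse_Tcirc, Tcirc]
  simp only [AlgHom.smul_sub_smul_one_apply]
  simp [β]

theorem existsUnique_mem_candidateNeighbours :
    ∃! y, y ∈ X ∧ y ∈ candidateNeighbours cs ha ρ i α := by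
  obtain ⟨y, hyX, hy⟩ := hX.exists_mem_candidateNeighbours hα i
  refine ⟨y, ⟨hyX, hy⟩, fun z ⟨hzX, hz⟩ => ?_⟩
  have hzα : z ≠ α := by
    rintro rfl
    exact (List.nodup_cons.1 (hX.nodup_candidates hα i)).1
      (by simpa [candidateNeighbours] using hz)
  obtain ⟨c, a, hc, -, -, rfl⟩ := exists_smul_sub_smul_one_of_mem_candidateNeighbours hy
  obtain ⟨c', a', -, -, -, rfl⟩ := exists_smul_sub_smul_one_of_mem_candidateNeighbours hz
  have hspan := smul_add_smul_mem_span_pair α (ρ (ha.T (cs.simple i)) α) (-(c * a)) (-(c' * a'))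
    c' hc
  rw [← AlgHom.smul_sub_smul_one_apply, ← AlgHom.smul_sub_smul_one_apply] at hspan
  have hli : LinearIndepOn Kq id X := hX.1
  exact (hli.eq_or_eq_of_mem_span_pair hα hyX hzX hspan).resolve_left hzα

end

theorem map_mem_span (h : H) {v : Mo} (hv : v ∈ Submodule.span Kq X) :
    ρ h v ∈ Submodule.span Kq X := by
  have hh : h ∈ Algebra.adjoin Kq (Set.range fun i => ha.T (cs.simple i)) := by
    rw [ha.adjoin_range_T_simple]; exact Algebra.mem_top
  induction hh using Algebra.adjoin_induction generalizing v with
  | mem x hx =>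
    obtain ⟨i, rfl⟩ := hx
    exact (Submodule.span_le (p := (Submodule.span Kq X).comap (ρ (ha.T (cs.simple i))))).2
      (fun α hα => hX.T_simple_apply_mem_span hα i) hv
  | algebraMap r =>
    rw [AlgHom.commutes, Module.algebraMap_end_apply]
    exact Submodule.smul_mem _ r hv
  | add x y _ _ hx hy =>
    rw [map_add, LinearMap.add_apply]
    exact Submodule.add_mem _ (hx hv) (hy hv)
  | mul x y _ _ hx hy =>
    rw [map_mul, Module.End.mul_apply]
    exact hx (hy hv)

end SupportsWDigraph

end Representation

/-- Lemma `submodule`.  If `X ⊆ M` supports a `W`-digraph,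
then (i) for `s ∈ S` and `α ∈ X` the five elements `α, T_s α, T_s⁻¹ α, T_s° α,
(T_s°)⁻¹ α` are pairwise distinct and exactly one of the last four lies in
`X`; and (ii) the span of `X` is an `H`-submodule of `M`. -/
theorem supports_wdigraph_distinct_unique_span {Mo : Type*}
    [AddCommGroup Mo] [Module Kq Mo]
    (cs : CoxeterSystem M W) (ha : HeckeAlgebra cs H)
    (ρ : H →ₐ[Kq] Module.End Kq Mo) (X : Set Mo)
    (hX : SupportsWDigraph cs ha ρ X) :
    (∀ α ∈ X, ∀ i : B,
      ([α, ρ (ha.T (cs.simple i)) α, ρ (Ring.inverse (ha.T (cs.simple i))) α,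
          ρ (Tcirc cs ha i) α, ρ (Ring.inverse (Tcirc cs ha i)) α] :
        List Mo).Pairwise (· ≠ ·) ∧
      ∃! y : Mo, y ∈ X ∧
        y ∈ ({ρ (ha.T (cs.simple i)) α, ρ (Ring.inverse (ha.T (cs.simple i))) α,
              ρ (Tcirc cs ha i) α, ρ (Ring.inverse (Tcirc cs ha i)) α} : Set Mo)) ∧
    (∀ h : H, ∀ v ∈ Submodule.span Kq X, ρ h v ∈ Submodule.span Kq X) :=
  ⟨fun _ hα i => ⟨hX.nodup_candidates hα i, hX.existsUnique_mem_candidateNeighbours hα i⟩,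
    fun h _ hv => hX.map_mem_span h hv⟩
end
end

section
/- Let (W,S) be a Coxeter system, Γ a W-digraph with vertex set X, and let the 0-Hecke algebra H_0 act on the ℚ-vector space M_0 with basis X by: a_s·α = β if Γ has an edge (solid or dashed) from α to β labeled s, and a_s·α = −α if the edge of Γ labeled s at α ends at α. Then: (i) for every α ∈ X and w ∈ W, either a_w·α ∈ X or −a_w·α ∈ X; (ii) for α, β ∈ X, there exists w ∈ W with β = a_w·α or β = −a_w·α if and only if there is a directed path in Γ from α to β. -/
open Finsupp

set_option synthInstance.maxHeartbeats 1000000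
set_option maxHeartbeats 1000000

noncomputable section

variable {B W : Type*} [Group W] {M : CoxeterMatrix B}
variable {H : Type*} [Ring H] [Algebra Kq H]

/-- The `0`-Hecke algebra of `(W,S)` over `ℚ`: a `ℚ`-algebra with basis
`{a_w : w ∈ W}` such that `a_1 = 1`, `a_s a_w = a_{sw}` if `ℓ(sw) > ℓ(w)`,
and `a_s a_w = -a_w` if `ℓ(sw) < ℓ(w)`. -/
structure ZeroHeckeAlgebra {B W : Type*} [Group W] {M : CoxeterMatrix B}
    (cs : CoxeterSystem M W) (H0 : Type*) [Ring H0] [Algebra ℚ H0] where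
  a : W → H0
  basis : Module.Basis W ℚ H0
  basis_eq : ∀ w, basis w = a w
  a_one : a 1 = 1
  a_mul_of_lt : ∀ (i : B) (w : W), cs.length w < cs.length (cs.simple i * w) →
    a (cs.simple i) * a w = a (cs.simple i * w)
  a_mul_of_gt : ∀ (i : B) (w : W), cs.length (cs.simple i * w) < cs.length w →
    a (cs.simple i) * a w = - a w

/-- `ρ0` is the representation of the `0`-Hecke algebra on `M₀` (the
`ℚ`-vector space with basis the vertex set of `Γ`) in which
`a_s · α = β` if `Γ` has an edge (solid or dashed) from `α` to `β` labeled
`s`, and `a_s · α = -α` if the edge of `Γ` labeled `s` at `α` ends at `α`. -/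
def ZeroHeckeRep {V H0 : Type*} [Ring H0] [Algebra ℚ H0]
    (cs : CoxeterSystem M W) (hz : ZeroHeckeAlgebra cs H0)
    (Γ : SLabeledDigraph V B)
    (ρ0 : H0 →ₐ[ℚ] Module.End ℚ (V →₀ ℚ)) : Prop :=
  ∀ (α β : V) (i : B) (d : Bool), Γ.Edge α β i d →
    ρ0 (hz.a (cs.simple i)) (single α (1 : ℚ)) = single β (1 : ℚ) ∧
    ρ0 (hz.a (cs.simple i)) (single β (1 : ℚ)) = - single β (1 : ℚ)

/-! Along a reduced word for `w`, each factor `a_s` either moves a signed vertex `±β` along the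
`s`-edge leaving `β` or negates it, so `a_w α = ±β` for the end `β` of a directed path from `α`.
Conversely a path from `α` is followed by multiplying `w` on the left by the labels of its edges;
no label is a descent, since `a_s a_w = -a_w` would negate the current vertex instead of moving it. -/

def IsSignedSingle {V R : Type*} [Ring R] (x : V →₀ R) (β : V) : Prop :=
  x = single β 1 ∨ x = -single β 1

namespace IsSignedSingle

variable {V V' R : Type*} [Ring R] {x : V →₀ R} {β γ : V}

theorem single_self (β : V) : IsSignedSingle (single β (1 : R)) β := Or.inl rfl

theorem neg (hx : IsSignedSingle x β) : IsSignedSingle (-x) β := by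
  rcases hx with rfl | rfl
  · exact Or.inr rfl
  · exact Or.inl (neg_neg _)

theorem support_eq [Nontrivial R] (hx : IsSignedSingle x β) : x.support = {β} := by
  rcases hx with rfl | rfl <;> simp [support_neg]

theorem unique [Nontrivial R] (hβ : IsSignedSingle x β) (hγ : IsSignedSingle x γ) : β = γ :=
  Finset.singleton_inj.mp (hβ.support_eq.symm.trans hγ.support_eq)

theorem map {F : Type*} [FunLike F (V →₀ R) (V' →₀ R)] [AddMonoidHomClass F (V →₀ R) (V' →₀ R)]
    (f : F) {γ : V'} (hx : IsSignedSingle x β) (hf : IsSignedSingle (f (single β 1)) γ) :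
    IsSignedSingle (f x) γ := by
  rcases hx with rfl | rfl
  · exact hf
  · rw [map_neg]
    exact hf.neg

end IsSignedSingle

namespace ZeroHeckeAlgebra

variable {H0 : Type*} [Ring H0] [Algebra ℚ H0] {cs : CoxeterSystem M W}
  (hz : ZeroHeckeAlgebra cs H0)

theorem a_wordProd_of_isReduced {ω : List B} (hω : cs.IsReduced ω) :
    hz.a (cs.wordProd ω) = (ω.map fun i ↦ hz.a (cs.simple i)).prod := by
  induction ω with
  | nil => exact hz.a_one
  | cons i ω ih =>
    have hlt : cs.length (cs.wordProd ω) < cs.length (cs.simple i * cs.wordProd ω) := by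
      have hω' : cs.IsReduced ω := hω.drop 1
      rw [← cs.wordProd_cons, hω.eq, hω'.eq, List.length_cons]
      exact Nat.lt_succ_self _
    rw [cs.wordProd_cons, List.map_cons, List.prod_cons, ← hz.a_mul_of_lt i _ hlt,
      ih (hω.drop 1)]

end ZeroHeckeAlgebra

namespace ZeroHeckeRep

variable {V H0 : Type*} [Ring H0] [Algebra ℚ H0] {cs : CoxeterSystem M W}
  {hz : ZeroHeckeAlgebra cs H0} {Γ : SLabeledDigraph V B}
  {ρ0 : H0 →ₐ[ℚ] Module.End ℚ (V →₀ ℚ)}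

theorem exists_reachable_act_simple (hρ0 : ZeroHeckeRep cs hz Γ ρ0) (β : V) (i : B) :
    ∃ γ, Relation.ReflTransGen Γ.DAdj β γ ∧
      IsSignedSingle (ρ0 (hz.a (cs.simple i)) (single β 1)) γ := by
  obtain ⟨⟨a, b, d⟩, ⟨rfl | rfl, hedge⟩, -⟩ := Γ.unique_edge β i
  · exact ⟨b, .single ⟨i, d, hedge⟩, Or.inl (hρ0 a b i d hedge).1⟩
  · exact ⟨b, .refl, Or.inr (hρ0 a b i d hedge).2⟩

theorem exists_reachable_act_prod (hρ0 : ZeroHeckeRep cs hz Γ ρ0) (ω : List B) (α : V) :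
    ∃ β, Relation.ReflTransGen Γ.DAdj α β ∧
      IsSignedSingle (ρ0 (ω.map fun i ↦ hz.a (cs.simple i)).prod (single α 1)) β := by
  induction ω with
  | nil => exact ⟨α, .refl, by simpa using IsSignedSingle.single_self α⟩
  | cons i ω ih =>
    obtain ⟨β, hαβ, hβ⟩ := ih
    obtain ⟨γ, hβγ, hγ⟩ := hρ0.exists_reachable_act_simple β i
    refine ⟨γ, hαβ.trans hβγ, ?_⟩
    rw [List.map_cons, List.prod_cons, map_mul, Module.End.mul_apply]
    exact hβ.map _ hγ

theorem exists_reachable_act (hρ0 : ZeroHeckeRep cs hz Γ ρ0) (w : W) (α : V) :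
    ∃ β, Relation.ReflTransGen Γ.DAdj α β ∧ IsSignedSingle (ρ0 (hz.a w) (single α 1)) β := by
  obtain ⟨ω, hω, rfl⟩ := cs.exists_isReduced w
  rw [hz.a_wordProd_of_isReduced hω]
  exact hρ0.exists_reachable_act_prod ω α

theorem length_lt_length_simple_mul_of_edge (hρ0 : ZeroHeckeRep cs hz Γ ρ0)
    {x : V →₀ ℚ} {w : W} {β γ : V} {i : B} {d : Bool}
    (hx : IsSignedSingle (ρ0 (hz.a w) x) β) (hedge : Γ.Edge β γ i d) :
    cs.length w < cs.length (cs.simple i * w) := by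
  rcases cs.length_simple_mul w i with hlen | hlen
  · omega
  · have hneg : ρ0 (hz.a (cs.simple i)) (ρ0 (hz.a w) x) = -ρ0 (hz.a w) x := by
      rw [← Module.End.mul_apply, ← map_mul, hz.a_mul_of_gt i w (by omega), map_neg,
        LinearMap.neg_apply]
    have hγ : IsSignedSingle (ρ0 (hz.a (cs.simple i)) (ρ0 (hz.a w) x)) γ :=
      hx.map _ (Or.inl (hρ0 β γ i d hedge).1)
    rw [hneg] at hγ
    exact absurd (hx.neg.unique hγ ▸ hedge) (Γ.no_loop γ i d)

theorem exists_act_of_reflTransGen (hρ0 : ZeroHeckeRep cs hz Γ ρ0) {α β : V}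
    (hαβ : Relation.ReflTransGen Γ.DAdj α β) :
    ∃ w, IsSignedSingle (ρ0 (hz.a w) (single α 1)) β := by
  induction hαβ with
  | refl => exact ⟨1, by simpa [hz.a_one] using IsSignedSingle.single_self α⟩
  | tail _ hβγ ih =>
    obtain ⟨i, d, hedge⟩ := hβγ
    obtain ⟨w, hw⟩ := ih
    refine ⟨cs.simple i * w, ?_⟩
    rw [← hz.a_mul_of_lt i w (hρ0.length_lt_length_simple_mul_of_edge hw hedge), map_mul,
      Module.End.mul_apply]
    exact hw.map _ (Or.inl (hρ0 _ _ i d hedge).1)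

end ZeroHeckeRep

theorem zero_hecke_paths_general {V H0 : Type*} [Ring H0] [Algebra ℚ H0]
    (cs : CoxeterSystem M W)
    (Γ : SLabeledDigraph V B)
    (hz : ZeroHeckeAlgebra cs H0)
    (ρ0 : H0 →ₐ[ℚ] Module.End ℚ (V →₀ ℚ)) (hρ0 : ZeroHeckeRep cs hz Γ ρ0) :
    (∀ (α : V) (w : W), ∃ β : V,
      ρ0 (hz.a w) (single α (1 : ℚ)) = single β (1 : ℚ) ∨
      ρ0 (hz.a w) (single α (1 : ℚ)) = - single β (1 : ℚ)) ∧
    (∀ α β : V,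
      (∃ w : W,
        ρ0 (hz.a w) (single α (1 : ℚ)) = single β (1 : ℚ) ∨
        ρ0 (hz.a w) (single α (1 : ℚ)) = - single β (1 : ℚ)) ↔
      Relation.ReflTransGen Γ.DAdj α β) := by
  refine ⟨fun α w ↦ ?_, fun α β ↦ ⟨?_, hρ0.exists_act_of_reflTransGen⟩⟩
  · obtain ⟨β, -, hβ⟩ := hρ0.exists_reachable_act w α
    exact ⟨β, hβ⟩
  · rintro ⟨w, hw⟩
    obtain ⟨γ, hαγ, hγ⟩ := hρ0.exists_reachable_act w α
    rwa [IsSignedSingle.unique hw hγ]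

/-- Lemma `h0paths`.  Let `Γ` be a `W`-digraph with vertex
set `X`, and let the `0`-Hecke algebra act on `M₀` as above.  Then:
(i) for every vertex `α` and `w ∈ W`, `a_w α ∈ X` or `-a_w α ∈ X`;
(ii) for vertices `α, β`, there is `w ∈ W` with `β = ±a_w α` if and only if
there is a directed path in `Γ` from `α` to `β`. -/
theorem zero_hecke_paths {V H0 : Type*} [Ring H0] [Algebra ℚ H0]
    (cs : CoxeterSystem M W) (ha : HeckeAlgebra cs H)
    (Γ : SLabeledDigraph V B) (hwd : IsWDigraph cs ha Γ)
    (hz : ZeroHeckeAlgebra cs H0)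
    (ρ0 : H0 →ₐ[ℚ] Module.End ℚ (V →₀ ℚ)) (hρ0 : ZeroHeckeRep cs hz Γ ρ0) :
    (∀ (α : V) (w : W), ∃ β : V,
      ρ0 (hz.a w) (single α (1 : ℚ)) = single β (1 : ℚ) ∨
      ρ0 (hz.a w) (single α (1 : ℚ)) = - single β (1 : ℚ)) ∧
    (∀ α β : V,
      (∃ w : W,
        ρ0 (hz.a w) (single α (1 : ℚ)) = single β (1 : ℚ) ∨
        ρ0 (hz.a w) (single α (1 : ℚ)) = - single β (1 : ℚ)) ↔
      Relation.ReflTransGen Γ.DAdj α β) :=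
  zero_hecke_paths_general cs Γ hz ρ0 hρ0
end
end
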